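/- Let ν be a measure on ℝ × ℝ with both marginals equal to Lebesgue measure, and suppose ν is supported on the complete graph of a nondecreasing function w : ℝ → ℝ (i.e., ν vanishes on every quadrant (-∞,v₀) × (w₀,∞) with w₀ > w(v₀) and every quadrant (v₀,∞) × (-∞,w₀) with w₀ < w(v₀)). Then there exists θ ∈ ℝ such that w(v) = v + θ for all v. -/

import Mathlib

/-!
Letting `w₀` tend to `w v₀` along a sequence closes the null quadrants of the hypotheses: `ν`-a.e.,
`p.1 < a` forces `p.2 ≤ w a` and `a < p.1` forces `w a ≤ p.2`. Hence for `a < b`, `ν`-a.e., a first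
coordinate in `(a, b)` gives a second coordinate in `[w a, w b]`, and a second coordinate in
`(w a, w b)` gives a first coordinate in `[a, b]`. As both marginals are Lebesgue measure, this
yields `b - a ≤ w b - w a ≤ b - a`.
-/

open MeasureTheory Set

theorem ae_le_of_forall_lt_ae_le {X β : Type*} [MeasurableSpace X] {μ : Measure X}
    [LinearOrder β] [TopologicalSpace β] [OrderTopology β] [DenselyOrdered β] [NoMaxOrder β]
    [FirstCountableTopology β] {P : X → Prop} {g : X → β} {c : β}
    (h : ∀ c', c < c' → ∀ᵐ x ∂μ, P x → g x ≤ c') : ∀ᵐ x ∂μ, P x → g x ≤ c := by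
  obtain ⟨u, -, hcu, hu⟩ := exists_seq_strictAnti_tendsto c
  filter_upwards [ae_all_iff.2 fun n => h (u n) (hcu n)] with x hx hPx
  exact ge_of_tendsto' hu fun n => hx n hPx

theorem sub_le_sub_of_ae_mem_Ioo_imp_mem_Icc {X : Type*} [MeasurableSpace X] {μ : Measure X}
    {f g : X → ℝ} (hf : ∀ s, MeasurableSet s → μ (f ⁻¹' s) = volume s)
    (hg : ∀ s, MeasurableSet s → μ (g ⁻¹' s) = volume s) {a b c d : ℝ} (hab : a < b)
    (h : ∀ᵐ x ∂μ, f x ∈ Ioo a b → g x ∈ Icc c d) : b - a ≤ d - c := by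
  have hvol : ENNReal.ofReal (b - a) ≤ ENNReal.ofReal (d - c) := by
    rw [← Real.volume_Ioo, ← Real.volume_Icc, ← hf _ measurableSet_Ioo, ← hg _ measurableSet_Icc]
    exact measure_mono_ae h
  exact (ENNReal.ofReal_le_ofReal_iff'.1 hvol).resolve_right (by linarith)

section CompleteGraph

variable {ν : Measure (ℝ × ℝ)} {w : ℝ → ℝ}

theorem ae_fst_lt_imp_snd_le
    (hsupp₁ : ∀ v₀ w₀ : ℝ, w v₀ < w₀ → ν (Iio v₀ ×ˢ Ioi w₀) = 0) (a : ℝ) :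
    ∀ᵐ p ∂ν, p.1 < a → p.2 ≤ w a :=
  ae_le_of_forall_lt_ae_le fun w₀ hw₀ => by
    rw [ae_iff]
    convert hsupp₁ a w₀ hw₀ using 2
    ext p
    simp

theorem ae_lt_fst_imp_le_snd
    (hsupp₂ : ∀ v₀ w₀ : ℝ, w₀ < w v₀ → ν (Ioi v₀ ×ˢ Iio w₀) = 0) (a : ℝ) :
    ∀ᵐ p ∂ν, a < p.1 → w a ≤ p.2 :=
  ae_le_of_forall_lt_ae_le (β := ℝᵒᵈ) (g := fun p : ℝ × ℝ => OrderDual.toDual p.2) fun w₀ hw₀ => by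
    rw [ae_iff]
    convert hsupp₂ a (OrderDual.ofDual w₀) hw₀ using 2
    ext p
    simp

end CompleteGraph

theorem monotone_support_uniform_marginals_is_shift_general
    (ν : Measure (ℝ × ℝ))
    (hmarg₁ : ∀ A : Set ℝ, MeasurableSet A → ν (A ×ˢ Set.univ) = volume A)
    (hmarg₂ : ∀ B : Set ℝ, MeasurableSet B → ν (Set.univ ×ˢ B) = volume B)
    (w : ℝ → ℝ)
    (hsupp₁ : ∀ v₀ w₀ : ℝ, w v₀ < w₀ → ν (Set.Iio v₀ ×ˢ Set.Ioi w₀) = 0)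
    (hsupp₂ : ∀ v₀ w₀ : ℝ, w₀ < w v₀ → ν (Set.Ioi v₀ ×ˢ Set.Iio w₀) = 0) :
    ∃ θ : ℝ, ∀ v : ℝ, w v = v + θ := by
  have hfst : ∀ s, MeasurableSet s → ν (Prod.fst ⁻¹' s) = volume s := by
    simpa only [prod_univ] using hmarg₁
  have hsnd : ∀ s, MeasurableSet s → ν (Prod.snd ⁻¹' s) = volume s := by
    simpa only [univ_prod] using hmarg₂
  have hshift : ∀ a b, a < b → w b - w a = b - a := by
    intro a b hab
    have hle : b - a ≤ w b - w a := sub_le_sub_of_ae_mem_Ioo_imp_mem_Icc hfst hsnd hab <| by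
      filter_upwards [ae_fst_lt_imp_snd_le hsupp₁ b, ae_lt_fst_imp_le_snd hsupp₂ a]
        with p hb ha hp
      exact ⟨ha hp.1, hb hp.2⟩
    have hge : w b - w a ≤ b - a := sub_le_sub_of_ae_mem_Ioo_imp_mem_Icc hsnd hfst
        (by linarith) <| by
      filter_upwards [ae_fst_lt_imp_snd_le hsupp₁ a, ae_lt_fst_imp_le_snd hsupp₂ b]
        with p ha hb hp
      exact ⟨not_lt.1 fun h => (ha h).not_gt hp.1, not_lt.1 fun h => (hb h).not_gt hp.2⟩
    linarith
  refine ⟨w 0, fun v => ?_⟩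
  rcases lt_trichotomy v 0 with hv | rfl | hv
  · linarith [hshift v 0 hv]
  · ring
  · linarith [hshift 0 v hv]

theorem monotone_support_uniform_marginals_is_shift
    (ν : Measure (ℝ × ℝ))
    (hmarg₁ : ∀ A : Set ℝ, MeasurableSet A → ν (A ×ˢ Set.univ) = volume A)
    (hmarg₂ : ∀ B : Set ℝ, MeasurableSet B → ν (Set.univ ×ˢ B) = volume B)
    (w : ℝ → ℝ) (hw : Monotone w)
    (hsupp₁ : ∀ v₀ w₀ : ℝ, w v₀ < w₀ → ν (Set.Iio v₀ ×ˢ Set.Ioi w₀) = 0)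
    (hsupp₂ : ∀ v₀ w₀ : ℝ, w₀ < w v₀ → ν (Set.Ioi v₀ ×ˢ Set.Iio w₀) = 0) :
    ∃ θ : ℝ, ∀ v : ℝ, w v = v + θ :=
  monotone_support_uniform_marginals_is_shift_general ν hmarg₁ hmarg₂ w hsupp₁ hsupp₂
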